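/- arXiv:2112.03322 — 4 statements merged into one kernel-verified Lean document; each statement's English description precedes it below -/
import Mathlib

section
/- (Rademacher–Menshov inequality) For any 2 ≤ ρ < ∞, any j₀, m ∈ ℕ with j₀ < 2^m, and any sequence of complex numbers (a_k)_{k∈ℕ}, one has V^ρ(a_j : j₀ ≤ j ≤ 2^m) ≤ √2 · ∑_{i=0}^{m} ( ∑_{j ∈ [j₀ 2^{-i}, 2^{m-i} - 1] ∩ ℤ} |a_{(j+1)2^i} - a_{j 2^i}|² )^{1/2}. -/
/-!
Each increment `a t - a s` with `s ≤ t ≤ 2 ^ m` telescopes into at most two dyadic increments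
`a ((j + 1) * 2 ^ i) - a (j * 2 ^ i)` per scale `i ≤ m`, each over a dyadic interval inside
`[s, t]`: round `s` up and `t` down to even numbers and recurse on the sequence `k ↦ a (2 * k)`.
For the consecutive intervals of a partition, the dyadic intervals used at a fixed scale are
therefore distinct, so by Cauchy–Schwarz the `ℓ²` norm of the scale-`i` parts is at most `√2`
times the scale-`i` square function. Minkowski's inequality sums over the scales, and
`ℓ^ρ ≤ ℓ²` for `ρ ≥ 2` passes from the `ρ`-variation to the `ℓ²` sum.
-/

open scoped BigOperators ENNReal NNReal

/-- The `ρ`-variation of the finite family `a j`, `lo ≤ j ≤ hi`, of complex numbers: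
the supremum over finite strictly increasing sequences in `[lo, hi] ∩ ℕ`. -/
noncomputable def varRange (ρ : ℝ) (a : ℕ → ℂ) (lo hi : ℕ) : ℝ≥0∞ :=
  ⨆ (J : ℕ) (t : Fin (J + 1) → ℕ) (_ : StrictMono t) (_ : ∀ k, lo ≤ t k ∧ t k ≤ hi),
    (∑ j : Fin J, (‖a (t j.succ) - a (t j.castSucc)‖₊ : ℝ≥0∞) ^ ρ) ^ (1 / ρ)

open Finset

namespace ENNReal

variable {ι κ : Type*}

theorem rpow_sum_rpow_le (s : Finset ι) (f : ι → ℝ≥0∞) {p q : ℝ} (hp : 0 < p) (hpq : p ≤ q) :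
    (∑ i ∈ s, f i ^ q) ^ (1 / q) ≤ (∑ i ∈ s, f i ^ p) ^ (1 / p) := by
  have hq : 0 < q := hp.trans_le hpq
  have hsub : (∑ i ∈ s, f i ^ q) ^ (p / q) ≤ ∑ i ∈ s, (f i ^ q) ^ (p / q) :=
    le_sum_of_subadditive (· ^ (p / q)) (by simp [zero_rpow_of_pos (div_pos hp hq)])
      (fun x y => rpow_add_le_add_rpow x y (div_pos hp hq).le ((div_le_one hq).2 hpq)) s _
  calc (∑ i ∈ s, f i ^ q) ^ (1 / q) = ((∑ i ∈ s, f i ^ q) ^ (p / q)) ^ (1 / p) := by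
        rw [← rpow_mul]; field_simp
    _ ≤ (∑ i ∈ s, (f i ^ q) ^ (p / q)) ^ (1 / p) := by gcongr
    _ = (∑ i ∈ s, f i ^ p) ^ (1 / p) := by
        simp only [← rpow_mul]; field_simp

theorem Lp_sum_le (s : Finset ι) (t : Finset κ) (f : ι → κ → ℝ≥0∞) {p : ℝ} (hp : 1 ≤ p) :
    (∑ k ∈ t, (∑ i ∈ s, f i k) ^ p) ^ (1 / p) ≤ ∑ i ∈ s, (∑ k ∈ t, f i k ^ p) ^ (1 / p) := by
  have hp0 : 0 < p := zero_lt_one.trans_le hp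
  simpa only [Finset.sum_apply] using
    le_sum_of_subadditive (fun g : κ → ℝ≥0∞ => (∑ k ∈ t, g k ^ p) ^ (1 / p))
      (by simp [hp0]) (fun g h => Lp_add_le t g h hp) s f

end ENNReal

section Dyadic

variable {G : Type*} [AddCommGroup G]

def dyadicIncrement (a : ℕ → G) (i j : ℕ) : G := a ((j + 1) * 2 ^ i) - a (j * 2 ^ i)

theorem dyadicIncrement_succ (a : ℕ → G) (i j : ℕ) :
    dyadicIncrement a (i + 1) j = dyadicIncrement (fun k => a (2 * k)) i j := by
  simp only [dyadicIncrement, pow_succ]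
  ring_nf

theorem sum_dyadicIncrement_zero (a : ℕ → G) {s t : ℕ} (hst : s ≤ t) :
    ∑ j ∈ Ico s t, dyadicIncrement a 0 j = a t - a s := by
  simpa [dyadicIncrement] using sum_Ico_sub a hst

theorem exists_dyadic_decomposition (a : ℕ → G) {m s t : ℕ} (hst : s ≤ t) (ht : t ≤ 2 ^ m) :
    ∃ D : ℕ → Finset ℕ, (∀ i, #(D i) ≤ 2) ∧
      (∀ i, ∀ j ∈ D i, s ≤ j * 2 ^ i ∧ (j + 1) * 2 ^ i ≤ t) ∧
      a t - a s = ∑ i ∈ range (m + 1), ∑ j ∈ D i, dyadicIncrement a i j := by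
  induction m generalizing a s t with
  | zero =>
    refine ⟨fun | 0 => Ico s t | _ + 1 => ∅, ?_, ?_, ?_⟩
    · rintro (_ | i) <;> simp; omega
    · rintro (_ | i) j hj <;> simp at hj ⊢; omega
    · simp [sum_dyadicIncrement_zero a hst]
  | succ m ih =>
    rcases hst.eq_or_lt with rfl | hlt
    · exact ⟨fun _ => ∅, by simp, by simp, by simp⟩
    set s' := (s + 1) / 2
    set t' := t / 2
    obtain ⟨D', hcard, hD', hsum⟩ := ih (fun k => a (2 * k)) (s := s') (t := t')
      (by omega) (by rw [pow_succ] at ht; omega)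
    refine ⟨fun | 0 => Ico s (2 * s') ∪ Ico (2 * t') t | i + 1 => D' i, ?_, ?_, ?_⟩
    · rintro (_ | i)
      · exact (card_union_le _ _).trans (by simp; omega)
      · exact hcard i
    · rintro (_ | i) j hj
      · simp at hj ⊢; omega
      · obtain ⟨h1, h2⟩ := hD' i j hj
        rw [pow_succ, ← mul_assoc, ← mul_assoc]
        omega
    · rw [sum_range_succ']
      simp only [dyadicIncrement_succ, ← hsum]
      rw [sum_union (disjoint_left.2 fun j h1 h2 => by simp at h1 h2; omega),
        sum_dyadicIncrement_zero a (by omega), sum_dyadicIncrement_zero a (by omega)]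
      abel

end Dyadic

theorem sum_rpow_two_sum_le_of_pairwiseDisjoint {ι κ : Type*} {s : Finset κ} {D : κ → Finset ι}
    (hD : (s : Set κ).PairwiseDisjoint D) {F : Finset ι} (hDF : ∀ k ∈ s, D k ⊆ F) {c : ℕ}
    (hc : ∀ k ∈ s, #(D k) ≤ c) (x : ι → ℝ≥0∞) :
    ∑ k ∈ s, (∑ j ∈ D k, x j) ^ (2 : ℝ) ≤ c * ∑ j ∈ F, x j ^ (2 : ℝ) := by
  classical
  calc ∑ k ∈ s, (∑ j ∈ D k, x j) ^ (2 : ℝ) ≤ ∑ k ∈ s, c * ∑ j ∈ D k, x j ^ (2 : ℝ) := by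
        refine sum_le_sum fun k hk => ?_
        refine (ENNReal.rpow_sum_le_const_mul_sum_rpow _ _ one_le_two).trans ?_
        norm_num
        gcongr
        exact_mod_cast hc k hk
    _ = c * ∑ j ∈ s.biUnion D, x j ^ (2 : ℝ) := by rw [← mul_sum, sum_biUnion hD]
    _ ≤ c * ∑ j ∈ F, x j ^ (2 : ℝ) := by gcongr; exact biUnion_subset.2 hDF

theorem pairwise_disjoint_of_dyadic_subintervals {J i : ℕ} {σ : Fin (J + 1) → ℕ} (hσ : Monotone σ)
    {D : Fin J → Finset ℕ}
    (hD : ∀ k, ∀ j ∈ D k, σ k.castSucc ≤ j * 2 ^ i ∧ (j + 1) * 2 ^ i ≤ σ k.succ) :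
    Pairwise (Function.onFun Disjoint D) := by
  have key : ∀ k k', k < k' → ∀ j ∈ D k, j ∉ D k' := fun k k' hlt j hj hj' => by
    have hlen : j * 2 ^ i < (j + 1) * 2 ^ i :=
      Nat.mul_lt_mul_of_pos_right (Nat.lt_succ_self j) (Nat.two_pow_pos i)
    have := hσ (Fin.succ_le_castSucc_iff.2 hlt)
    have := (hD k j hj).2
    have := (hD k' j hj').1
    omega
  intro k k' hne
  rcases hne.lt_or_gt with hlt | hlt
  · exact disjoint_left.2 (key k k' hlt)
  · exact disjoint_right.2 (key k' k hlt)

theorem lt_two_pow_sub_of_succ_mul_two_pow_le {i j m : ℕ} (hi : i ≤ m)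
    (h : (j + 1) * 2 ^ i ≤ 2 ^ m) : j < 2 ^ (m - i) := by
  rw [← Nat.pow_sub_mul_pow 2 hi] at h
  exact Nat.le_of_mul_le_mul_right h (Nat.two_pow_pos i)

theorem sum_rpow_two_sum_dyadic_le {J m i j₀ : ℕ} (hi : i ≤ m) {σ : Fin (J + 1) → ℕ}
    (hσ : Monotone σ) (hb : ∀ k, j₀ ≤ σ k ∧ σ k ≤ 2 ^ m) {D : Fin J → Finset ℕ}
    (hcard : ∀ k, #(D k) ≤ 2)
    (hD : ∀ k, ∀ j ∈ D k, σ k.castSucc ≤ j * 2 ^ i ∧ (j + 1) * 2 ^ i ≤ σ k.succ)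
    (x : ℕ → ℝ≥0∞) :
    ∑ k, (∑ j ∈ D k, x j) ^ (2 : ℝ) ≤
      2 * ∑ j ∈ (range (2 ^ (m - i))).filter (fun j => j₀ ≤ j * 2 ^ i), x j ^ (2 : ℝ) := by
  refine sum_rpow_two_sum_le_of_pairwiseDisjoint
    ((pairwise_disjoint_of_dyadic_subintervals hσ hD).set_pairwise _)
    (fun k _ j hj => ?_) (fun k _ => hcard k) x
  obtain ⟨hlo, hhi⟩ := hD k j hj
  simp only [mem_filter, mem_range]
  exact ⟨lt_two_pow_sub_of_succ_mul_two_pow_le hi (hhi.trans (hb k.succ).2),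
    (hb k.castSucc).1.trans hlo⟩

theorem stmt3_general (ρ : ℝ) (hρ : 2 ≤ ρ) (j₀ m : ℕ) (a : ℕ → ℂ) :
    varRange ρ a j₀ (2 ^ m) ≤
      ENNReal.ofReal (Real.sqrt 2) *
        ∑ i ∈ Finset.range (m + 1),
          (∑ j ∈ (Finset.range (2 ^ (m - i))).filter (fun j => j₀ ≤ j * 2 ^ i),
              (‖a ((j + 1) * 2 ^ i) - a (j * 2 ^ i)‖₊ : ℝ≥0∞) ^ 2) ^ ((1 : ℝ) / 2) := by
  refine iSup_le fun J => iSup_le fun σ => iSup_le fun hσ => iSup_le fun hb => ?_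
  choose D hcard hD hsum using fun k : Fin J =>
    exists_dyadic_decomposition a (hσ.monotone (Fin.castSucc_le_succ k)) (hb k.succ).2
  set x : ℕ → ℕ → ℝ≥0∞ := fun i j => ‖dyadicIncrement a i j‖ₑ
  have hsqrt : ENNReal.ofReal (Real.sqrt 2) = 2 ^ ((1 : ℝ) / 2) := by
    rw [Real.sqrt_eq_rpow, ← ENNReal.ofReal_rpow_of_nonneg zero_le_two (by norm_num),
      ENNReal.ofReal_ofNat]
  calc _ ≤ (∑ k : Fin J, ‖a (σ k.succ) - a (σ k.castSucc)‖ₑ ^ (2 : ℝ)) ^ (1 / (2 : ℝ)) :=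
        ENNReal.rpow_sum_rpow_le _ _ two_pos hρ
    _ ≤ (∑ k : Fin J, (∑ i ∈ range (m + 1), ∑ j ∈ D k i, x i j) ^ (2 : ℝ)) ^ (1 / (2 : ℝ)) := by
        gcongr with k
        rw [hsum k]
        exact (enorm_sum_le _ _).trans (sum_le_sum fun i _ => enorm_sum_le _ _)
    _ ≤ ∑ i ∈ range (m + 1), (∑ k : Fin J, (∑ j ∈ D k i, x i j) ^ (2 : ℝ)) ^ (1 / (2 : ℝ)) :=
        ENNReal.Lp_sum_le _ _ _ one_le_two
    _ ≤ ∑ i ∈ range (m + 1), (2 * ∑ j ∈ (range (2 ^ (m - i))).filter (fun j => j₀ ≤ j * 2 ^ i),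
          x i j ^ (2 : ℝ)) ^ (1 / (2 : ℝ)) := by
        gcongr with i hi
        exact sum_rpow_two_sum_dyadic_le (Nat.lt_succ_iff.1 (mem_range.1 hi)) hσ.monotone hb
          (fun k => hcard k i) (fun k => hD k i) (x i)
    _ = _ := by
        rw [hsqrt, mul_sum]
        refine sum_congr rfl fun i _ => ?_
        rw [ENNReal.mul_rpow_of_nonneg _ _ (by norm_num)]
        simp only [ENNReal.rpow_two, x, dyadicIncrement]
        rfl

/-- The Rademacher–Menshov inequality: for `2 ≤ ρ < ∞`, `j₀ < 2^m` and any sequence of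
complex numbers `(a k)`, one has
`V^ρ(a_j : j₀ ≤ j ≤ 2^m) ≤ √2 ∑_{i=0}^{m} (∑_{j₀ 2^{-i} ≤ j ≤ 2^{m-i}-1} |a_{(j+1)2^i} - a_{j2^i}|²)^{1/2}`. -/
theorem stmt3 (ρ : ℝ) (hρ : 2 ≤ ρ) (j₀ m : ℕ) (hj₀ : j₀ < 2 ^ m) (a : ℕ → ℂ) :
    varRange ρ a j₀ (2 ^ m) ≤
      ENNReal.ofReal (Real.sqrt 2) *
        ∑ i ∈ Finset.range (m + 1),
          (∑ j ∈ (Finset.range (2 ^ (m - i))).filter (fun j => j₀ ≤ j * 2 ^ i),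
              (‖a ((j + 1) * 2 ^ i) - a (j * 2 ^ i)‖₊ : ℝ≥0∞) ^ 2) ^ ((1 : ℝ) / 2) :=
  stmt3_general ρ hρ j₀ m a
end

section
/- For the moment curve A₀ on G₀^# and x = (x₁,…,x_r), y = (y₁,…,y_r) ∈ ℝ^r, the product D(x,y) := A₀(x₁)^{-1}·A₀(y₁)·⋯·A₀(x_r)^{-1}·A₀(y_r) has components [D(x,y)]_{l₁0} = ∑_{j=1}^r (y_j^{l₁} − x_j^{l₁}), and for l₂ ≥ 1, [D(x,y)]_{l₁l₂} = ∑_{1≤j₁<j₂≤r} (y_{j₁}^{l₁} − x_{j₁}^{l₁})(y_{j₂}^{l₂} − x_{j₂}^{l₂}) + ∑_{j=1}^r (x_j^{l₁+l₂} − x_j^{l₁} y_j^{l₂}). -/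
open scoped BigOperators

/-- The index set `Y_d = {(l₁, l₂) : 0 ≤ l₂ < l₁ ≤ d}`. -/
abbrev Yd (d : ℕ) := {p : Fin (d + 1) × Fin (d + 1) // (p.2 : ℕ) < (p.1 : ℕ)}

/-- The index `(l₁, 0)` associated to `p = (l₁, l₂) ∈ Y_d`. -/
def idxA {d : ℕ} (p : Yd d) : Yd d :=
  ⟨(p.val.1, 0), by simpa using Nat.lt_of_le_of_lt (Nat.zero_le (p.val.2 : ℕ)) p.property⟩

/-- The index `(l₂, 0)` associated to `p = (l₁, l₂) ∈ Y_d` with `l₂ ≥ 1`. -/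
def idxB {d : ℕ} (p : Yd d) (h : (p.val.2 : ℕ) ≠ 0) : Yd d :=
  ⟨(p.val.2, 0), by simpa using Nat.pos_of_ne_zero h⟩

/-- The step-two group multiplication on `G₀^# = R^{Y_d}`:
`[x·y]_{l₁0} = x_{l₁0} + y_{l₁0}` and
`[x·y]_{l₁l₂} = x_{l₁l₂} + y_{l₁l₂} + x_{l₁0} y_{l₂0}` for `l₂ ≥ 1`. -/
def Gmul {R : Type*} [CommRing R] {d : ℕ} (x y : Yd d → R) : Yd d → R := fun p =>
  if h : (p.val.2 : ℕ) = 0 then x p + y p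
  else x p + y p + x (idxA p) * y (idxB p h)

/-- The inverse in `G₀^#`: `g⁻¹ = (-g^{(1)}, -g^{(2)} + R₀(g^{(1)}, g^{(1)}))`. -/
def Ginv {R : Type*} [CommRing R] {d : ℕ} (x : Yd d → R) : Yd d → R := fun p =>
  if h : (p.val.2 : ℕ) = 0 then -x p
  else -x p + x (idxA p) * x (idxB p h)

/-- The moment curve `A₀`. -/
def A0 {R : Type*} [CommRing R] {d : ℕ} (t : R) : Yd d → R := fun p =>
  if (p.val.2 : ℕ) = 0 then t ^ (p.val.1 : ℕ) else 0

/-- Ordered product of a list of elements of `G₀^#`. -/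
def listProd {R : Type*} [CommRing R] {d : ℕ} : List (Yd d → R) → (Yd d → R)
  | [] => fun _ => 0
  | a :: l => Gmul a (listProd l)

lemma listProd_fst {d : ℕ} : ∀ {r : ℕ} (g : Fin r → Yd d → ℝ) (p : Yd d),
    (p.val.2 : ℕ) = 0 → listProd (List.ofFn g) p = ∑ j, g j p := by
  intro r
  induction r with
  | zero => intro g p h; simp [listProd]
  | succ r ih =>
    intro g p h
    rw [List.ofFn_succ]
    show Gmul (g 0) (listProd (List.ofFn fun i => g i.succ)) p = _
    rw [Gmul]
    simp only [dif_pos h]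
    rw [ih _ p h, Fin.sum_univ_succ]

lemma listProd_snd {d : ℕ} : ∀ {r : ℕ} (g : Fin r → Yd d → ℝ) (p : Yd d)
    (h : (p.val.2 : ℕ) ≠ 0), listProd (List.ofFn g) p =
      (∑ j, g j p) + ∑ j₂, ∑ j₁ ∈ Finset.univ.filter (fun j₁ => j₁ < j₂),
        g j₁ (idxA p) * g j₂ (idxB p h) := by
  intro r
  induction r with
  | zero => intro g p h; simp [listProd]
  | succ r ih =>
    intro g p h
    rw [List.ofFn_succ]
    show Gmul (g 0) (listProd (List.ofFn fun i => g i.succ)) p = _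
    rw [Gmul]
    simp only [dif_neg h]
    rw [ih _ p h, listProd_fst _ (idxB p h) rfl]
    simp only [Finset.sum_filter]
    rw [Fin.sum_univ_succ (f := fun j => g j p)]
    conv_rhs => rw [Fin.sum_univ_succ]
    have e1 : ∀ j₂ : Fin (r+1),
        (∑ j₁ : Fin (r+1), if j₁ < j₂ then g j₁ (idxA p) * g j₂ (idxB p h) else 0) =
        (if (0 : Fin (r+1)) < j₂ then g 0 (idxA p) * g j₂ (idxB p h) else 0) +
          ∑ j₁ : Fin r, if j₁.succ < j₂ then g j₁.succ (idxA p) * g j₂ (idxB p h) else 0 := by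
      intro j₂; rw [Fin.sum_univ_succ]
    simp only [e1]
    simp only [Fin.succ_pos, if_true, Fin.succ_lt_succ_iff, lt_self_iff_false,
      Fin.not_lt_zero, if_false, Finset.sum_const_zero, add_zero, zero_add]
    rw [Finset.sum_add_distrib, ← Finset.mul_sum]
    ring

/-- Components of `D(x, y) = A₀(x₁)⁻¹ · A₀(y₁) · ⋯ · A₀(x_r)⁻¹ · A₀(y_r)`:
`[D(x,y)]_{l₁0} = ∑_j (y_j^{l₁} - x_j^{l₁})` and, for `l₂ ≥ 1`,
`[D(x,y)]_{l₁l₂} = ∑_{j₁<j₂} (y_{j₁}^{l₁} - x_{j₁}^{l₁})(y_{j₂}^{l₂} - x_{j₂}^{l₂})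
 + ∑_j (x_j^{l₁+l₂} - x_j^{l₁} y_j^{l₂})`. -/
theorem stmt9 (d r : ℕ) (x y : Fin r → ℝ) :
    (∀ p : Yd d, (p.val.2 : ℕ) = 0 →
      listProd (List.ofFn fun j => Gmul (Ginv (A0 (x j) : Yd d → ℝ)) (A0 (y j))) p =
        ∑ j : Fin r, ((y j) ^ (p.val.1 : ℕ) - (x j) ^ (p.val.1 : ℕ))) ∧
    (∀ p : Yd d, (p.val.2 : ℕ) ≠ 0 →
      listProd (List.ofFn fun j => Gmul (Ginv (A0 (x j) : Yd d → ℝ)) (A0 (y j))) p =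
        (∑ j₂ : Fin r, ∑ j₁ ∈ Finset.univ.filter (fun j₁ : Fin r => j₁ < j₂),
          ((y j₁) ^ (p.val.1 : ℕ) - (x j₁) ^ (p.val.1 : ℕ)) *
            ((y j₂) ^ (p.val.2 : ℕ) - (x j₂) ^ (p.val.2 : ℕ))) +
        ∑ j : Fin r,
          ((x j) ^ ((p.val.1 : ℕ) + (p.val.2 : ℕ)) -
            (x j) ^ (p.val.1 : ℕ) * (y j) ^ (p.val.2 : ℕ))) := by
  set g := fun j => Gmul (Ginv (A0 (x j) : Yd d → ℝ)) (A0 (y j)) with hg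
  have hfst : ∀ (j : Fin r) (q : Yd d), (q.val.2 : ℕ) = 0 →
      g j q = (y j) ^ (q.val.1 : ℕ) - (x j) ^ (q.val.1 : ℕ) := by
    intro j q hq
    simp only [hg, Gmul, Ginv, A0, dif_pos hq, if_pos hq]
    ring
  have hsnd : ∀ (j : Fin r) (q : Yd d) (hq : (q.val.2 : ℕ) ≠ 0),
      g j q = (x j) ^ ((q.val.1 : ℕ) + (q.val.2 : ℕ)) -
        (x j) ^ (q.val.1 : ℕ) * (y j) ^ (q.val.2 : ℕ) := by
    intro j q hq
    simp only [hg, Gmul, Ginv, A0, dif_neg hq, if_neg hq, idxA, idxB]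
    simp [pow_add]
    ring
  constructor
  · intro p hp
    rw [listProd_fst g p hp]
    exact Finset.sum_congr rfl fun j _ => hfst j p hp
  · intro p hp
    rw [listProd_snd g p hp]
    rw [add_comm]
    congr 1
    · refine Finset.sum_congr rfl fun j₂ _ => Finset.sum_congr rfl fun j₁ _ => ?_
      rw [hfst j₁ (idxA p) rfl, hfst j₂ (idxB p hp) rfl]
      rfl
    · exact Finset.sum_congr rfl fun j _ => hsnd j p hp
end

section
/- With the quasi-norm q_β(x) = sup_{(l₁,l₂)∈Y_d} (β_{l₁l₂}|x_{l₁l₂}|)^{1/(l₁+l₂)} on G₀^#, where β_{l₁l₂} = 2^{⌊δw⌋} for l₂ ≠ 0 and β_{l₁0} = 2^{⌊δ'w⌋}, and the subgroup H_Q = {h ∈ ℤ^{Y_d} : Q | h_{l₁l₂} for all (l₁,l₂)}, the discrete ball B_{β,H_Q}(x,r) = {y ∈ H_Q : q_β(x·y^{-1}) < r} satisfies, for any x ∈ G₀^# and any r ≥ 2Q·2^{δ'w}, the cardinality bound |B_{β,H_Q}(x,r)| ≃ ∏_{(l₁,l₂)∈Y_d} r^{l₁+l₂}/(Q β_{l₁l₂}),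 with implied constants depending only on d. -/
/-!
Writing `x · y⁻¹` out coordinatewise gives `(x · y⁻¹)_p = c_p(y) - y_p`, where the centre
`c_p(y) = x_p + (y_{l₁0} - x_{l₁0}) y_{l₂0}` is just `x_p` on the first layer `l₂ = 0` and on the
second layer depends only on the first-layer coordinates of `y`. Hence `q_β(x · y⁻¹) < r` says
that each `y_p` is a multiple of `Q` within `M_p = r^{l₁+l₂} / β_p` of `c_p(y)`. Counting the
first-layer coordinates (in fixed intervals) and then, for each such choice, the second-layer
coordinates (in intervals fixed by that choice) turns the ball into a union of boxes. The
hypothesis `r ≥ 2Q·2^{δ'w}` gives `M_p ≥ Q`, so each interval contains between `M_p / Q` and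
`3 M_p / Q` multiples of `Q`, and the bounds hold with `c = 3^{|Y_d|}`.
-/

open scoped BigOperators

/-- The quasi-norm `q_β(x) = sup_{(l₁,l₂) ∈ Y_d} (β_{l₁l₂} |x_{l₁l₂}|)^{1/(l₁+l₂)}`. -/
noncomputable def qnorm {d : ℕ} (β : Yd d → ℝ) (x : Yd d → ℝ) : ℝ :=
  ⨆ p : Yd d, (β p * |x p|) ^ ((1 : ℝ) / (((p.val.1 : ℕ) : ℝ) + ((p.val.2 : ℕ) : ℝ)))

noncomputable def multiplesNear (Q : ℕ) (a M : ℝ) : Finset ℤ :=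
  (Finset.Ioo ⌊(a - M) / Q⌋ ⌈(a + M) / Q⌉).image ((Q : ℤ) * ·)

section multiplesNear

variable {Q : ℕ} {a M : ℝ}

theorem mem_multiplesNear (hQ : 0 < Q) {k : ℤ} :
    k ∈ multiplesNear Q a M ↔ (Q : ℤ) ∣ k ∧ |a - k| < M := by
  have hQ' : (0 : ℝ) < Q := by exact_mod_cast hQ
  simp only [multiplesNear, Finset.mem_image, Finset.mem_Ioo, Int.floor_lt, Int.lt_ceil,
    div_lt_iff₀ hQ', lt_div_iff₀ hQ', abs_sub_lt_iff]
  constructor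
  · rintro ⟨j, ⟨hlo, hhi⟩, rfl⟩
    push_cast
    exact ⟨dvd_mul_right _ _, by linarith, by linarith⟩
  · rintro ⟨⟨j, rfl⟩, hlo, hhi⟩
    push_cast at hlo hhi
    exact ⟨j, ⟨by linarith, by linarith⟩, rfl⟩

theorem card_multiplesNear (hQ : 0 < Q) (hM : 0 < M) :
    ((multiplesNear Q a M).card : ℝ) = ⌈(a + M) / Q⌉ - ⌊(a - M) / Q⌋ - 1 := by
  have hQ' : (0 : ℝ) < Q := by exact_mod_cast hQ
  have hlt : ⌊(a - M) / Q⌋ < ⌈(a + M) / Q⌉ := by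
    have : (a - M) / Q < (a + M) / Q := div_lt_div_of_pos_right (by linarith) hQ'
    exact_mod_cast (Int.floor_le _).trans_lt (this.trans_le (Int.le_ceil _))
  rw [multiplesNear, Finset.card_image_of_injective _ (mul_right_injective₀ (by positivity))]
  exact_mod_cast Int.card_Ioo_of_lt _ _ hlt

theorem div_le_card_multiplesNear (hQ : 0 < Q) (hM : Q ≤ M) :
    M / Q ≤ (multiplesNear Q a M).card := by
  have hQ' : (0 : ℝ) < Q := by exact_mod_cast hQ
  have h1 : 1 ≤ M / Q := (one_le_div hQ').2 hM
  have hspan : (a + M) / Q - (a - M) / Q = 2 * (M / Q) := by ring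
  rw [card_multiplesNear hQ (hQ'.trans_le hM)]
  linarith [Int.le_ceil ((a + M) / Q), Int.floor_le ((a - M) / Q)]

theorem card_multiplesNear_le (hQ : 0 < Q) (hM : Q ≤ M) :
    ((multiplesNear Q a M).card : ℝ) ≤ 3 * (M / Q) := by
  have hQ' : (0 : ℝ) < Q := by exact_mod_cast hQ
  have h1 : 1 ≤ M / Q := (one_le_div hQ').2 hM
  have hspan : (a + M) / Q - (a - M) / Q = 2 * (M / Q) := by ring
  rw [card_multiplesNear hQ (hQ'.trans_le hM)]
  linarith [Int.ceil_lt_add_one ((a + M) / Q), Int.sub_one_lt_floor ((a - M) / Q)]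

theorem prod_div_le_card_piFinset_multiplesNear {ι : Type*} [Fintype ι] [DecidableEq ι]
    (hQ : 0 < Q) {a M : ι → ℝ} (hM : ∀ i, Q ≤ M i) :
    ∏ i, M i / Q ≤ (Fintype.piFinset fun i => multiplesNear Q (a i) (M i)).card := by
  rw [Fintype.card_piFinset, Nat.cast_prod]
  have hQ' : (0 : ℝ) < Q := by exact_mod_cast hQ
  exact Finset.prod_le_prod (fun i _ => div_nonneg (hQ'.le.trans (hM i)) hQ'.le)
    fun i _ => div_le_card_multiplesNear hQ (hM i)

theorem card_piFinset_multiplesNear_le {ι : Type*} [Fintype ι] [DecidableEq ι]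
    (hQ : 0 < Q) {a M : ι → ℝ} (hM : ∀ i, Q ≤ M i) :
    ((Fintype.piFinset fun i => multiplesNear Q (a i) (M i)).card : ℝ) ≤ ∏ i, 3 * (M i / Q) := by
  rw [Fintype.card_piFinset, Nat.cast_prod]
  exact Finset.prod_le_prod (fun i _ => Nat.cast_nonneg _)
    fun i _ => card_multiplesNear_le hQ (hM i)

end multiplesNear

theorem ncard_setOf_fst_mem_snd_mem {α β : Type*} (A : Finset α) (J : α → Finset β) :
    {z : α × β | z.1 ∈ A ∧ z.2 ∈ J z.1}.ncard = ∑ u ∈ A, (J u).card := by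
  rw [← Finset.card_sigma, ← Set.ncard_coe_finset, ← Set.ncard_image_of_injective _
    (Equiv.sigmaEquivProd α β).injective]
  congr 1
  ext ⟨u, v⟩
  simp

theorem forall_iff_forall_subtype_and_forall_subtype_not {ι : Type*} (P R : ι → Prop) :
    (∀ i, R i) ↔ (∀ i : {i // P i}, R i) ∧ (∀ i : {i // ¬P i}, R i) :=
  ⟨fun h => ⟨fun i => h i, fun i => h i⟩,
    fun h i => by_cases (fun hi => h.1 ⟨i, hi⟩) fun hi => h.2 ⟨i, hi⟩⟩

def multiplesBox {ι : Type*} (Q : ℕ) (c : ι → (ι → ℤ) → ℝ) (M : ι → ℝ) : Set (ι → ℤ) :=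
  {y : ι → ℤ | ∀ i, (Q : ℤ) ∣ y i ∧ |c i y - y i| < M i}

section multiplesBox

variable {ι : Type*} [Fintype ι] [DecidableEq ι] (P : ι → Prop) [DecidablePred P] {Q : ℕ}
  (c : ι → (ι → ℤ) → ℝ) (M : ι → ℝ)

theorem ncard_multiplesBox_eq_sum (hQ : 0 < Q) (hc_const : ∀ i, P i → ∀ y, c i y = c i 0)
    (hc_congr : ∀ i y y', (∀ j, P j → y j = y' j) → c i y = c i y') :
    (multiplesBox Q c M).ncard =
      ∑ u ∈ Fintype.piFinset (fun i : {i // P i} => multiplesNear Q (c i 0) (M i)),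
        (Fintype.piFinset fun i : {i // ¬P i} =>
          multiplesNear Q (c i ((Equiv.piEquivPiSubtypeProd P _).symm (u, 0))) (M i)).card := by
  set e := Equiv.piEquivPiSubtypeProd P (fun _ => ℤ)
  rw [multiplesBox, ← ncard_setOf_fst_mem_snd_mem, ← Set.ncard_image_of_injective _ e.injective]
  congr 1
  ext ⟨u, v⟩
  have hc : ∀ i, c i (e.symm (u, v)) = c i (e.symm (u, 0)) := fun i =>
    hc_congr i _ _ fun j hj => by simp [e, Equiv.piEquivPiSubtypeProd_symm_apply, hj]
  simp only [Set.mem_image_equiv, Set.mem_ofPred_eq, Fintype.mem_piFinset, mem_multiplesNear hQ,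
    hc]
  rw [forall_iff_forall_subtype_and_forall_subtype_not P]
  refine and_congr (forall_congr' fun i => ?_) (forall_congr' fun i => ?_)
  · simp [e, Equiv.piEquivPiSubtypeProd_symm_apply, i.2, ← hc_const i i.2 (e.symm (u, 0))]
  · simp [e, Equiv.piEquivPiSubtypeProd_symm_apply, i.2]

theorem ncard_multiplesBox_bounds (hQ : 0 < Q) (hM : ∀ i, Q ≤ M i)
    (hc_const : ∀ i, P i → ∀ y, c i y = c i 0)
    (hc_congr : ∀ i y y', (∀ j, P j → y j = y' j) → c i y = c i y') :
    ∏ i, M i / Q ≤ ((multiplesBox Q c M).ncard : ℝ) ∧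
      ((multiplesBox Q c M).ncard : ℝ) ≤ 3 ^ Fintype.card ι * ∏ i, M i / Q := by
  have hQ' : (0 : ℝ) < Q := by exact_mod_cast hQ
  have hMQ : ∀ i, 0 ≤ M i / Q := fun i => div_nonneg (hQ'.le.trans (hM i)) hQ'.le
  rw [ncard_multiplesBox_eq_sum P c M hQ hc_const hc_congr, Nat.cast_sum]
  set A := Fintype.piFinset fun i : {i // P i} => multiplesNear Q (c i 0) (M i)
  constructor
  · calc ∏ i, M i / Q
        = (∏ i : {i // P i}, M i / Q) * ∏ i : {i // ¬P i}, M i / Q :=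
          (Fintype.prod_subtype_mul_prod_subtype P _).symm
      _ ≤ A.card * ∏ i : {i // ¬P i}, M i / Q := by
          gcongr
          · exact Finset.prod_nonneg fun i _ => hMQ i
          · exact prod_div_le_card_piFinset_multiplesNear hQ fun i => hM i
      _ = A.card • ∏ i : {i // ¬P i}, M i / Q := (nsmul_eq_mul _ _).symm
      _ ≤ _ := Finset.card_nsmul_le_sum _ _ _ fun u _ =>
          prod_div_le_card_piFinset_multiplesNear hQ fun i => hM i
  · calc _ ≤ A.card • ∏ i : {i // ¬P i}, 3 * (M i / Q) := Finset.sum_le_card_nsmul _ _ _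
          fun u _ => card_piFinset_multiplesNear_le hQ fun i => hM i
      _ = A.card * ∏ i : {i // ¬P i}, 3 * (M i / Q) := nsmul_eq_mul _ _
      _ ≤ (∏ i : {i // P i}, 3 * (M i / Q)) * ∏ i : {i // ¬P i}, 3 * (M i / Q) := by
          gcongr
          · exact Finset.prod_nonneg fun i _ => by linarith [hMQ i]
          · exact card_piFinset_multiplesNear_le hQ fun i => hM i
      _ = 3 ^ Fintype.card ι * ∏ i, M i / Q := by
          rw [Fintype.prod_subtype_mul_prod_subtype P fun i => 3 * (M i / Q),
            Finset.prod_mul_distrib, Finset.prod_const, Finset.card_univ]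

end multiplesBox

theorem Real.iSup_lt_iff_of_finite {ι : Type*} [Finite ι] {f : ι → ℝ} {r : ℝ} (hr : 0 < r) :
    ⨆ i, f i < r ↔ ∀ i, f i < r := by
  rcases isEmpty_or_nonempty ι with hι | hι
  · simp [hr]
  · obtain ⟨i₀, hi₀⟩ := Finite.exists_max f
    exact ⟨fun h i => (le_ciSup (Set.finite_range f).bddAbove i).trans_lt h,
      fun h => (ciSup_le hi₀).trans_lt (h i₀)⟩

theorem two_pow_floor_mem_Ioc {t s : ℝ} (ht : 0 ≤ t) (hts : t ≤ s) :
    (2 : ℝ) ^ ⌊t⌋₊ ∈ Set.Ioc 0 (2 ^ s) := by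
  refine ⟨by positivity, ?_⟩
  rw [← Real.rpow_natCast]
  exact Real.rpow_le_rpow_of_exponent_le one_le_two ((Nat.floor_le ht).trans hts)

theorem le_pow_div_of_mul_le {Q b r : ℝ} {n : ℕ} (hb : 0 < b) (hr : 1 ≤ r) (hn : n ≠ 0)
    (h : Q * b ≤ r) : Q ≤ r ^ n / b := by
  rw [le_div_iff₀ hb]
  exact h.trans (le_self_pow₀ hr hn)

section Yd

variable {d : ℕ}

def Gcenter {R : Type*} [CommRing R] (x y : Yd d → R) (p : Yd d) : R :=
  if h : (p.val.2 : ℕ) = 0 then x p else x p + (y (idxA p) - x (idxA p)) * y (idxB p h)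

theorem Gmul_Ginv_apply {R : Type*} [CommRing R] (x y : Yd d → R) (p : Yd d) :
    Gmul x (Ginv y) p = Gcenter x y p - y p := by
  by_cases h : (p.val.2 : ℕ) = 0
  · simp [Gmul, Ginv, Gcenter, h]
    ring
  · simp [Gmul, Ginv, Gcenter, h, idxA, idxB]
    ring

theorem Gcenter_of_snd_eq_zero {R : Type*} [CommRing R] (x y : Yd d → R) {p : Yd d}
    (hp : (p.val.2 : ℕ) = 0) : Gcenter x y p = x p := by
  simp [Gcenter, hp]

theorem Gcenter_congr {R : Type*} [CommRing R] (x : Yd d → R) {y y' : Yd d → R}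
    (h : ∀ q : Yd d, (q.val.2 : ℕ) = 0 → y q = y' q) (p : Yd d) :
    Gcenter x y p = Gcenter x y' p := by
  unfold Gcenter
  split_ifs with hp
  · rfl
  · rw [h (idxA p) rfl, h (idxB p hp) rfl]

theorem qnorm_lt_iff {β : Yd d → ℝ} (hβ : ∀ p, 0 < β p) (z : Yd d → ℝ) {r : ℝ} (hr : 0 < r) :
    qnorm β z < r ↔ ∀ p : Yd d, |z p| < r ^ ((p.val.1 : ℕ) + (p.val.2 : ℕ)) / β p := by
  rw [qnorm, Real.iSup_lt_iff_of_finite hr]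
  refine forall_congr' fun p => ?_
  have hexp : (0 : ℝ) < ((p.val.1 : ℕ) : ℝ) + ((p.val.2 : ℕ) : ℝ) := by
    have : (0 : ℝ) < ((p.val.1 : ℕ) : ℝ) := by exact_mod_cast (Nat.zero_le _).trans_lt p.property
    positivity
  rw [one_div, Real.rpow_inv_lt_iff_of_pos (by positivity [hβ p]) hr.le hexp, lt_div_iff₀ (hβ p),
    mul_comm, ← Nat.cast_add, Real.rpow_natCast]

end Yd

theorem stmt16_general (d : ℕ) :
    ∃ c : ℝ, 1 ≤ c ∧
      ∀ δ δ' : ℝ, 0 < δ → δ < δ' → δ' < 1 → ∀ w Q : ℕ, 1 ≤ Q →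
        ∀ (x : Yd d → ℝ) (r : ℝ), 2 * (Q : ℝ) * (2 : ℝ) ^ (δ' * (w : ℝ)) ≤ r →
          let β : Yd d → ℝ := fun p =>
            if (p.val.2 : ℕ) = 0 then (2 : ℝ) ^ (⌊δ' * (w : ℝ)⌋₊) else (2 : ℝ) ^ (⌊δ * (w : ℝ)⌋₊)
          let B : Set (Yd d → ℤ) := {y | (∀ p, (Q : ℤ) ∣ y p) ∧
            qnorm β (Gmul x (Ginv (fun p => ((y p : ℤ) : ℝ)))) < r}
          c⁻¹ * ∏ p : Yd d, r ^ ((p.val.1 : ℕ) + (p.val.2 : ℕ)) / ((Q : ℝ) * β p) ≤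
              (B.ncard : ℝ) ∧
            (B.ncard : ℝ) ≤
              c * ∏ p : Yd d, r ^ ((p.val.1 : ℕ) + (p.val.2 : ℕ)) / ((Q : ℝ) * β p) := by
  refine ⟨3 ^ Fintype.card (Yd d), one_le_pow₀ (by norm_num), ?_⟩
  intro δ δ' hδ hδδ' _ w Q hQ x r hr β B
  have hQ1 : (1 : ℝ) ≤ Q := by exact_mod_cast hQ
  have hδw : 0 ≤ δ * w := mul_nonneg hδ.le w.cast_nonneg
  have hδw_le : δ * w ≤ δ' * w := mul_le_mul_of_nonneg_right hδδ'.le w.cast_nonneg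
  have hβ : ∀ p, β p ∈ Set.Ioc 0 (2 ^ (δ' * w)) := fun p => by
    dsimp only [β]
    split
    exacts [two_pow_floor_mem_Ioc (hδw.trans hδw_le) le_rfl, two_pow_floor_mem_Ioc hδw hδw_le]
  have hr1 : 1 ≤ r := by nlinarith [Real.one_le_rpow one_le_two (hδw.trans hδw_le)]
  have hM : ∀ p : Yd d, (Q : ℝ) ≤ r ^ ((p.val.1 : ℕ) + (p.val.2 : ℕ)) / β p := fun p =>
    le_pow_div_of_mul_le (hβ p).1 hr1 (by have := p.property; omega)
      (by nlinarith [(hβ p).1, (hβ p).2])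
  have hB : B = multiplesBox Q (fun p y => Gcenter x (fun q => (y q : ℝ)) p)
      (fun p => r ^ ((p.val.1 : ℕ) + (p.val.2 : ℕ)) / β p) := by
    ext y
    simp only [B, multiplesBox, Set.mem_ofPred_eq,
      qnorm_lt_iff (fun p => (hβ p).1) _ (by linarith), Gmul_Ginv_apply, forall_and]
  have hprod : ∏ p : Yd d, r ^ ((p.val.1 : ℕ) + (p.val.2 : ℕ)) / ((Q : ℝ) * β p) =
      ∏ p : Yd d, r ^ ((p.val.1 : ℕ) + (p.val.2 : ℕ)) / β p / Q :=
    Finset.prod_congr rfl fun p _ => by rw [div_div, mul_comm (Q : ℝ)]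
  obtain ⟨hlo, hhi⟩ := ncard_multiplesBox_bounds (fun p : Yd d => (p.val.2 : ℕ) = 0)
    (fun p y => Gcenter x (fun q => (y q : ℝ)) p) _ hQ hM
    (fun p hp y => by simp only [Gcenter_of_snd_eq_zero _ _ hp])
    (fun p y y' h => Gcenter_congr x (fun q hq => by rw [h q hq]) p)
  rw [hB, hprod]
  refine ⟨le_trans (mul_le_of_le_one_left ?_ (inv_le_one_of_one_le₀ (one_le_pow₀ (by norm_num))))
    hlo, hhi⟩
  exact Finset.prod_nonneg fun p _ => div_nonneg (by linarith [hM p]) (by linarith)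

/-- Cardinality of the discrete shifted balls
`B_{β,H_Q}(x, r) = {y ∈ H_Q : q_β(x · y⁻¹) < r}` where `β_{l₁l₂} = 2^{⌊δw⌋}` for
`l₂ ≠ 0` and `β_{l₁0} = 2^{⌊δ'w⌋}`: for `r ≥ 2Q·2^{δ'w}` one has
`|B_{β,H_Q}(x, r)| ≃ ∏_{(l₁,l₂) ∈ Y_d} r^{l₁+l₂}/(Q β_{l₁l₂})`, with constants
depending only on `d`. -/
theorem stmt16 (d : ℕ) (hd : 1 ≤ d) :
    ∃ c : ℝ, 1 ≤ c ∧
      ∀ δ δ' : ℝ, 0 < δ → δ < δ' → δ' < 1 → ∀ w Q : ℕ, 1 ≤ Q →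
        ∀ (x : Yd d → ℝ) (r : ℝ), 2 * (Q : ℝ) * (2 : ℝ) ^ (δ' * (w : ℝ)) ≤ r →
          let β : Yd d → ℝ := fun p =>
            if (p.val.2 : ℕ) = 0 then (2 : ℝ) ^ (⌊δ' * (w : ℝ)⌋₊) else (2 : ℝ) ^ (⌊δ * (w : ℝ)⌋₊)
          let B : Set (Yd d → ℤ) := {y | (∀ p, (Q : ℤ) ∣ y p) ∧
            qnorm β (Gmul x (Ginv (fun p => ((y p : ℤ) : ℝ)))) < r}
          c⁻¹ * ∏ p : Yd d, r ^ ((p.val.1 : ℕ) + (p.val.2 : ℕ)) / ((Q : ℝ) * β p) ≤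
              (B.ncard : ℝ) ∧
            (B.ncard : ℝ) ≤
              c * ∏ p : Yd d, r ^ ((p.val.1 : ℕ) + (p.val.2 : ℕ)) / ((Q : ℝ) * β p) :=
  stmt16_general d
end

section
/- Define on G₀^# the quasi-metric q(x,y) := sup_{(l₁,l₂)∈Y_d} |[x·y^{-1}]_{l₁l₂}|^{1/(l₁+l₂)}. Then (G₀^#, Lebesgue measure, q) is a space of homogeneous type: q is a quasi-metric (q(x,y)=0 iff x=y, q(x,y) ≃ q(y,x), and q(x,z) ≲ q(x,y) + q(y,z)), and the Lebesgue measure of the ball {y : q(x,y) < r} is comparable to r^{∑_{(l₁,l₂)∈Y_d}(l₁+l₂)}, uniformly in x ∈ G₀^# and r > 0; in particular the measure is doubling. -/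
open scoped BigOperators

/-- The quasi-metric `q(x, y) = sup_{(l₁,l₂) ∈ Y_d} |[x·y⁻¹]_{l₁l₂}|^{1/(l₁+l₂)}`
on `G₀^#`. -/
noncomputable def qdist {d : ℕ} (x y : Yd d → ℝ) : ℝ :=
  ⨆ p : Yd d,
    |Gmul x (Ginv y) p| ^ ((1 : ℝ) / (((p.val.1 : ℕ) : ℝ) + ((p.val.2 : ℕ) : ℝ)))

namespace Stmt17Aux

open MeasureTheory Set

variable {d : ℕ}

/-- The homogeneity degree of an index. -/
def np (p : Yd d) : ℕ := (p.val.1 : ℕ) + (p.val.2 : ℕ)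

lemma np_pos (p : Yd d) : 0 < np p :=
  Nat.lt_of_lt_of_le (Nat.pos_of_ne_zero (by have := p.property; omega)) (Nat.le_add_right _ _)

lemma np_cast (p : Yd d) :
    (((p.val.1 : ℕ) : ℝ) + ((p.val.2 : ℕ) : ℝ)) = ((np p : ℕ) : ℝ) := by
  simp [np]

lemma idxA_snd (p : Yd d) : ((idxA p).val.2 : ℕ) = 0 := by simp [idxA]
lemma idxB_snd (p : Yd d) (h : (p.val.2 : ℕ) ≠ 0) : ((idxB p h).val.2 : ℕ) = 0 := by simp [idxB]
lemma np_idxA (p : Yd d) : np (idxA p) = (p.val.1 : ℕ) := by simp [np, idxA]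
lemma np_idxB (p : Yd d) (h : (p.val.2 : ℕ) ≠ 0) : np (idxB p h) = (p.val.2 : ℕ) := by
  simp [np, idxB]

/-- The "sup of roots" functional of which `qdist` is a special case. -/
noncomputable def f (w : Yd d → ℝ) : ℝ :=
  ⨆ p : Yd d, |w p| ^ ((1 : ℝ) / (((p.val.1 : ℕ) : ℝ) + ((p.val.2 : ℕ) : ℝ)))

lemma qdist_eq_f (x y : Yd d → ℝ) : qdist x y = f (Gmul x (Ginv y)) := rfl

lemma Gmul_Ginv_apply (x y : Yd d → ℝ) (p : Yd d) :
    Gmul x (Ginv y) p = if h : (p.val.2 : ℕ) = 0 then x p - y p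
      else x p - y p + (y (idxA p) - x (idxA p)) * y (idxB p h) := by
  by_cases h : (p.val.2 : ℕ) = 0 <;> simp [Gmul, Ginv, idxA, idxB, h] <;> ring

lemma Gmul_assoc_inv (x y z : Yd d → ℝ) :
    Gmul (Gmul x (Ginv y)) (Gmul y (Ginv z)) = Gmul x (Ginv z) := by
  funext p
  by_cases h : (p.val.2 : ℕ) = 0 <;> simp [Gmul, Ginv, idxA, idxB, h] <;> ring

lemma Gmul_swap (x y : Yd d → ℝ) :
    Gmul y (Ginv x) = Ginv (Gmul x (Ginv y)) := by
  funext p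
  by_cases h : (p.val.2 : ℕ) = 0 <;> simp [Gmul, Ginv, idxA, idxB, h] <;> ring

section sup

variable [Nonempty (Yd d)]

omit [Nonempty (Yd d)] in
lemma f_nonneg (w : Yd d → ℝ) : 0 ≤ f w :=
  Real.iSup_nonneg fun p => Real.rpow_nonneg (abs_nonneg _) _

omit [Nonempty (Yd d)] in
lemma le_f (w : Yd d → ℝ) (p : Yd d) :
    |w p| ^ ((1:ℝ) / (np p : ℝ)) ≤ f w := by
  rw [f]
  have := le_ciSup (Set.Finite.bddAbove (Set.finite_range
    (fun p : Yd d => |w p| ^ ((1 : ℝ) / (((p.val.1 : ℕ) : ℝ) + ((p.val.2 : ℕ) : ℝ)))))) p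
  rwa [np_cast] at *

omit [Nonempty (Yd d)] in
lemma abs_le_pow (w : Yd d → ℝ) (p : Yd d) : |w p| ≤ f w ^ (np p) := by
  have h1 : |w p| = (|w p| ^ ((1:ℝ) / (np p : ℝ))) ^ ((np p : ℕ) : ℝ) := by
    rw [Real.rpow_natCast, one_div,
      Real.rpow_inv_natCast_pow (abs_nonneg _) (np_pos p).ne']
  calc |w p| = _ := h1
    _ ≤ f w ^ ((np p : ℕ) : ℝ) :=
      Real.rpow_le_rpow (Real.rpow_nonneg (abs_nonneg _) _) (le_f w p) (by positivity)
    _ = f w ^ (np p) := Real.rpow_natCast _ _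

lemma f_le_of (w : Yd d → ℝ) {M : ℝ} (hM : 0 ≤ M)
    (h : ∀ p, |w p| ≤ M ^ (np p)) : f w ≤ M := by
  apply ciSup_le
  intro p
  rw [np_cast]
  calc |w p| ^ ((1:ℝ)/((np p : ℕ):ℝ)) ≤ (M ^ ((np p:ℕ):ℝ)) ^ ((1:ℝ)/((np p : ℕ):ℝ)) := by
        apply Real.rpow_le_rpow (abs_nonneg _) _ (by positivity)
        rw [Real.rpow_natCast]; exact h p
    _ = M := by
        rw [← Real.rpow_mul hM, mul_one_div, div_self (by exact_mod_cast (np_pos p).ne'),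
          Real.rpow_one]

lemma f_lt_iff (w : Yd d → ℝ) {r : ℝ} (hr : 0 < r) :
    f w < r ↔ ∀ p, |w p| < r ^ (np p) := by
  constructor
  · intro h p
    have h1 := le_f w p
    have h2 : |w p| ^ ((1:ℝ)/(np p:ℝ)) < r := lt_of_le_of_lt h1 h
    have := Real.rpow_lt_rpow (Real.rpow_nonneg (abs_nonneg _) _) h2
      (by exact_mod_cast np_pos p : (0:ℝ) < ((np p : ℕ):ℝ))
    rw [Real.rpow_natCast (|w p| ^ _) (np p), one_div,
      Real.rpow_inv_natCast_pow (abs_nonneg _) (np_pos p).ne',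
      Real.rpow_natCast] at this
    exact this
  · intro h
    obtain ⟨p₀, hp₀⟩ := Finite.exists_max
      (fun p : Yd d => |w p| ^ ((1 : ℝ) / (((p.val.1 : ℕ) : ℝ) + ((p.val.2 : ℕ) : ℝ))))
    have hle : f w ≤ |w p₀| ^ ((1 : ℝ) / (((p₀.val.1 : ℕ) : ℝ) + ((p₀.val.2 : ℕ) : ℝ))) :=
      ciSup_le hp₀
    refine lt_of_le_of_lt hle ?_
    rw [np_cast]
    calc |w p₀| ^ ((1:ℝ)/((np p₀:ℕ):ℝ)) < (r ^ ((np p₀:ℕ):ℝ)) ^ ((1:ℝ)/((np p₀:ℕ):ℝ)) := by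
          apply Real.rpow_lt_rpow (abs_nonneg _) _
            (by rw [one_div]; exact inv_pos.mpr (by exact_mod_cast np_pos p₀))
          rw [Real.rpow_natCast]; exact h p₀
      _ = r := by
          rw [← Real.rpow_mul hr.le, mul_one_div, div_self (by exact_mod_cast (np_pos p₀).ne'),
            Real.rpow_one]

end sup

/-- The skew-product model of `y ↦ x · y⁻¹`. -/
noncomputable def Psi (x : Yd d → ℝ) :
    ((∀ _i : {p : Yd d // (p.val.2 : ℕ) = 0}, ℝ) × (∀ _j : {p : Yd d // ¬(p.val.2 : ℕ) = 0}, ℝ)) →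
    ((∀ _i : {p : Yd d // (p.val.2 : ℕ) = 0}, ℝ) × (∀ _j : {p : Yd d // ¬(p.val.2 : ℕ) = 0}, ℝ)) :=
  fun ab =>
    ((fun i => x i.val) - ab.1,
     (fun j => x j.val + (ab.1 ⟨idxA j.val, idxA_snd j.val⟩ - x (idxA j.val)) *
        ab.1 ⟨idxB j.val j.prop, idxB_snd j.val j.prop⟩) - ab.2)

lemma psi_mp (x : Yd d → ℝ) : MeasurePreserving (Psi x) volume volume := by
  have hm : Measurable (Function.uncurry
      (fun (a : ∀ _i : {p : Yd d // (p.val.2 : ℕ) = 0}, ℝ)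
           (b : ∀ _j : {p : Yd d // ¬(p.val.2 : ℕ) = 0}, ℝ) =>
        (fun j => x j.val + (a ⟨idxA j.val, idxA_snd j.val⟩ - x (idxA j.val)) *
          a ⟨idxB j.val j.prop, idxB_snd j.val j.prop⟩) - b)) := by
    apply Measurable.sub
    · apply measurable_pi_lambda
      intro j
      exact (measurable_const.add ((((measurable_pi_apply _).comp measurable_fst).sub
        measurable_const).mul ((measurable_pi_apply _).comp measurable_fst)))
    · exact measurable_snd
  exact MeasureTheory.MeasurePreserving.skew_product
    (MeasureTheory.Measure.measurePreserving_sub_left volume _) hm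
    (Filter.Eventually.of_forall fun a =>
      (MeasureTheory.Measure.measurePreserving_sub_left volume _).map_eq)

lemma phi_mp (x : Yd d → ℝ) :
    MeasurePreserving (fun y : Yd d → ℝ => Gmul x (Ginv y)) volume volume := by
  classical
  set e := MeasurableEquiv.piEquivPiSubtypeProd (fun _ : Yd d => ℝ)
    (fun p : Yd d => (p.val.2 : ℕ) = 0) with he
  have h1 : MeasurePreserving e volume volume :=
    volume_preserving_piEquivPiSubtypeProd _ _
  have h2 : MeasurePreserving e.symm volume volume := h1.symm e
  have key : (fun y : Yd d → ℝ => Gmul x (Ginv y)) = e.symm ∘ (Psi x) ∘ e := by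
    funext y p
    show Gmul x (Ginv y) p = e.symm (Psi x (e y)) p
    by_cases h : (p.val.2 : ℕ) = 0
    · simp only [he, MeasurableEquiv.piEquivPiSubtypeProd, MeasurableEquiv.coe_mk,
        Equiv.piEquivPiSubtypeProd_apply, MeasurableEquiv.symm_mk,
        Equiv.piEquivPiSubtypeProd_symm_apply, Psi, h, dif_pos, Pi.sub_apply]
      simp [Gmul, Ginv, h]
      ring
    · simp only [he, MeasurableEquiv.piEquivPiSubtypeProd, MeasurableEquiv.coe_mk,
        Equiv.piEquivPiSubtypeProd_apply, MeasurableEquiv.symm_mk,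
        Equiv.piEquivPiSubtypeProd_symm_apply, Psi, h, dif_neg, not_false_iff, Pi.sub_apply]
      simp [Gmul, Ginv, h, idxA_snd, idxB_snd]
      ring
  rw [key]
  exact h2.comp ((psi_mp x).comp h1)

lemma volume_ball (x : Yd d → ℝ) (r : ℝ) (hr : 0 < r) :
    volume {y : Yd d → ℝ | ∀ p, |Gmul x (Ginv y) p| < r ^ np p} =
      ENNReal.ofReal ((2 : ℝ) ^ (Fintype.card (Yd d)) * r ^ (∑ p : Yd d, np p)) := by
  have hset : {y : Yd d → ℝ | ∀ p, |Gmul x (Ginv y) p| < r ^ np p} =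
      (fun y : Yd d → ℝ => Gmul x (Ginv y)) ⁻¹'
        (univ.pi fun p : Yd d => Ioo (-(r ^ np p)) (r ^ np p)) := by
    ext y
    simp only [mem_setOf_eq, mem_preimage, mem_pi, mem_univ, forall_true_left, mem_Ioo]
    exact forall_congr' fun p => abs_lt
  rw [hset, (phi_mp x).measure_preimage
    ((MeasurableSet.univ_pi fun p => measurableSet_Ioo).nullMeasurableSet)]
  rw [volume_pi_pi]
  have h1 : ∀ p : Yd d, volume (Ioo (-(r ^ np p)) (r ^ np p)) =
      ENNReal.ofReal (2 * r ^ np p) := by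
    intro p
    rw [Real.volume_Ioo]
    congr 1
    ring
  simp only [h1]
  rw [← ENNReal.ofReal_prod_of_nonneg (fun p _ => by positivity)]
  congr 1
  rw [Finset.prod_mul_distrib, Finset.prod_const, Finset.prod_pow_eq_pow_sum,
    Finset.card_univ]

end Stmt17Aux

/-- `(G₀^#, Lebesgue, q)` is a space of homogeneous type. -/
theorem stmt17 (d : ℕ) (hd : 1 ≤ d) :
    ∃ c : ℝ, 1 ≤ c ∧
      (∀ x y : Yd d → ℝ, 0 ≤ qdist x y ∧ (qdist x y = 0 ↔ x = y)) ∧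
      (∀ x y : Yd d → ℝ, qdist x y ≤ c * qdist y x) ∧
      (∀ x y z : Yd d → ℝ, qdist x z ≤ c * (qdist x y + qdist y z)) ∧
      (∀ (x : Yd d → ℝ) (r : ℝ), 0 < r →
        ENNReal.ofReal (c⁻¹ * r ^ (∑ p : Yd d, ((p.val.1 : ℕ) + (p.val.2 : ℕ)))) ≤
          MeasureTheory.volume {y : Yd d → ℝ | qdist x y < r} ∧
        MeasureTheory.volume {y : Yd d → ℝ | qdist x y < r} ≤
          ENNReal.ofReal (c * r ^ (∑ p : Yd d, ((p.val.1 : ℕ) + (p.val.2 : ℕ))))) ∧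
      (∀ (x : Yd d → ℝ) (r : ℝ), 0 < r →
        MeasureTheory.volume {y : Yd d → ℝ | qdist x y < 2 * r} ≤
          ENNReal.ofReal c * MeasureTheory.volume {y : Yd d → ℝ | qdist x y < r}) := by
  classical
  open Stmt17Aux in
  haveI : Nonempty (Yd d) := ⟨⟨(⟨1, by omega⟩, ⟨0, by omega⟩), by simp⟩⟩
  set N : ℕ := Fintype.card (Yd d) with hN
  set S : ℕ := ∑ p : Yd d, np p with hS
  have hSsum : (∑ p : Yd d, ((p.val.1 : ℕ) + (p.val.2 : ℕ))) = S := rfl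
  set c : ℝ := 3 * 2 ^ (N + S) with hc
  have h2NS : (1:ℝ) ≤ 2 ^ (N + S) := one_le_pow₀ one_le_two
  have hc1 : (1:ℝ) ≤ c := by rw [hc]; nlinarith
  have hc3 : (3:ℝ) ≤ c := by rw [hc]; nlinarith
  have hc0 : (0:ℝ) ≤ c := by linarith
  have hc2N : (2:ℝ) ^ N ≤ c := by
    rw [hc]
    have : (2:ℝ) ^ N ≤ 2 ^ (N + S) := pow_le_pow_right₀ one_le_two (Nat.le_add_right _ _)
    nlinarith [pow_pos (by norm_num : (0:ℝ) < 2) N]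
  have hc2S : (2:ℝ) ^ S ≤ c := by
    rw [hc]
    have : (2:ℝ) ^ S ≤ 2 ^ (N + S) := pow_le_pow_right₀ one_le_two (Nat.le_add_left _ _)
    nlinarith [pow_pos (by norm_num : (0:ℝ) < 2) S]
  refine ⟨c, hc1, ?_, ?_, ?_, ?_, ?_⟩
  · -- nonneg and zero-iff
    intro x y
    refine ⟨f_nonneg _, ?_, ?_⟩
    · intro hq
      have hw : ∀ p, Gmul x (Ginv y) p = 0 := by
        intro p
        have h1 := abs_le_pow (Gmul x (Ginv y)) p
        rw [← qdist_eq_f, hq, zero_pow (np_pos p).ne'] at h1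
        exact abs_eq_zero.mp (le_antisymm h1 (abs_nonneg _))
      funext p
      by_cases h : (p.val.2 : ℕ) = 0
      · have h1 := hw p
        rw [Gmul_Ginv_apply, dif_pos h] at h1
        linarith
      · have h1 := hw p
        have h2 := hw (idxA p)
        rw [Gmul_Ginv_apply, dif_pos (idxA_snd p)] at h2
        rw [Gmul_Ginv_apply, dif_neg h] at h1
        have h3 : y (idxA p) - x (idxA p) = 0 := by linarith
        rw [h3, zero_mul] at h1
        linarith
    · rintro rfl
      refine le_antisymm ?_ (f_nonneg _)
      rw [qdist_eq_f]
      apply f_le_of _ le_rfl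
      intro p
      have : Gmul x (Ginv x) p = 0 := by
        rw [Gmul_Ginv_apply]
        split_ifs with h <;> ring
      rw [this, abs_zero, zero_pow (np_pos p).ne']
  · -- quasi-symmetry
    intro x y
    set b := qdist y x with hb
    have hb0 : 0 ≤ b := f_nonneg _
    have key : qdist x y ≤ 2 * b := by
      rw [qdist_eq_f, Gmul_swap y x]
      apply f_le_of _ (by linarith)
      intro p
      set v := Gmul y (Ginv x) with hv
      have hvb : ∀ q : Yd d, |v q| ≤ b ^ np q := fun q => abs_le_pow v q
      have h2n : (2:ℝ) ≤ 2 ^ np p := le_self_pow₀ one_le_two (np_pos p).ne'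
      rw [Ginv]
      split_ifs with h
      · rw [abs_neg]
        calc |v p| ≤ b ^ np p := hvb p
          _ ≤ (2 * b) ^ np p := by
              apply pow_le_pow_left₀ hb0; linarith
      · calc |(-v p + v (idxA p) * v (idxB p h))| ≤ |v p| + |v (idxA p)| * |v (idxB p h)| := by
              calc _ ≤ |(-v p)| + |v (idxA p) * v (idxB p h)| := abs_add_le _ _
                _ = _ := by rw [abs_neg, abs_mul]
          _ ≤ b ^ np p + b ^ np (idxA p) * b ^ np (idxB p h) := by
              have h4 := hvb (idxA p)
              have h5 := hvb (idxB p h)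
              have h6 := hvb p
              have h7 : |v (idxA p)| * |v (idxB p h)| ≤ b ^ np (idxA p) * b ^ np (idxB p h) :=
                mul_le_mul h4 h5 (abs_nonneg _) (pow_nonneg hb0 _)
              linarith
          _ = 2 * b ^ np p := by
              rw [np_idxA, np_idxB, ← pow_add]
              have : (p.val.1 : ℕ) + (p.val.2 : ℕ) = np p := rfl
              rw [this]; ring
          _ ≤ (2 * b) ^ np p := by
              rw [mul_pow]
              have : b ^ np p ≤ b ^ np p := le_rfl
              nlinarith [pow_nonneg hb0 (np p), pow_nonneg (by norm_num : (0:ℝ) ≤ 2) (np p)]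
    calc qdist x y ≤ 2 * b := key
      _ ≤ c * b := by nlinarith
  · -- quasi-triangle
    intro x y z
    set a := qdist x y with ha
    set b := qdist y z with hbz
    have ha0 : 0 ≤ a := f_nonneg _
    have hb0 : 0 ≤ b := f_nonneg _
    have key : qdist x z ≤ 3 * (a + b) := by
      rw [qdist_eq_f, ← Gmul_assoc_inv x y z]
      apply f_le_of _ (by linarith)
      intro p
      set u := Gmul x (Ginv y) with hu
      set v := Gmul y (Ginv z) with hv
      have hua : ∀ q : Yd d, |u q| ≤ a ^ np q := fun q => abs_le_pow u q
      have hvb : ∀ q : Yd d, |v q| ≤ b ^ np q := fun q => abs_le_pow v q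
      have h3n : (3:ℝ) ≤ 3 ^ np p := le_self_pow₀ (by norm_num) (np_pos p).ne'
      have habn : ∀ m : ℕ, a ^ m ≤ (a + b) ^ m := fun m =>
        pow_le_pow_left₀ ha0 (by linarith) m
      have hbbn : ∀ m : ℕ, b ^ m ≤ (a + b) ^ m := fun m =>
        pow_le_pow_left₀ hb0 (by linarith) m
      rw [Gmul]
      split_ifs with h
      · calc |u p + v p| ≤ |u p| + |v p| := abs_add_le _ _
          _ ≤ a ^ np p + b ^ np p := add_le_add (hua p) (hvb p)
          _ ≤ (a+b) ^ np p + (a+b) ^ np p := add_le_add (habn _) (hbbn _)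
          _ ≤ 3 ^ np p * (a+b) ^ np p := by
              nlinarith [pow_nonneg (by linarith : (0:ℝ) ≤ a + b) (np p)]
          _ = (3 * (a+b)) ^ np p := (mul_pow _ _ _).symm
      · calc |u p + v p + u (idxA p) * v (idxB p h)|
            ≤ |u p| + |v p| + |u (idxA p)| * |v (idxB p h)| := by
              calc _ ≤ |u p + v p| + |u (idxA p) * v (idxB p h)| := abs_add_le _ _
                _ ≤ |u p| + |v p| + |u (idxA p) * v (idxB p h)| := by
                    have := abs_add_le (u p) (v p); linarith
                _ = _ := by rw [abs_mul]
          _ ≤ a ^ np p + b ^ np p + a ^ np (idxA p) * b ^ np (idxB p h) := by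
              have h4 := hua (idxA p)
              have h5 := hvb (idxB p h)
              have h7 : |u (idxA p)| * |v (idxB p h)| ≤ a ^ np (idxA p) * b ^ np (idxB p h) :=
                mul_le_mul h4 h5 (abs_nonneg _) (pow_nonneg ha0 _)
              have h8 := hua p
              have h9 := hvb p
              linarith
          _ ≤ (a+b) ^ np p + (a+b) ^ np p + (a+b) ^ np p := by
              have hmix2 : a ^ np (idxA p) * b ^ np (idxB p h) ≤ (a+b) ^ np p := by
                calc a ^ np (idxA p) * b ^ np (idxB p h)
                    ≤ (a+b) ^ np (idxA p) * (a+b) ^ np (idxB p h) := by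
                      apply mul_le_mul (habn _) (hbbn _) (pow_nonneg hb0 _)
                        (pow_nonneg (by linarith) _)
                  _ = (a+b) ^ np p := by
                      rw [← pow_add, np_idxA, np_idxB p h]
                      rfl
              have := habn (np p)
              have := hbbn (np p)
              linarith
          _ = 3 * (a+b) ^ np p := by ring
          _ ≤ 3 ^ np p * (a+b) ^ np p := by
              nlinarith [pow_nonneg (by linarith : (0:ℝ) ≤ a + b) (np p)]
          _ = (3 * (a+b)) ^ np p := (mul_pow _ _ _).symm
    calc qdist x z ≤ 3 * (a + b) := key
      _ ≤ c * (a + b) := by nlinarith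
  · -- volume of balls
    intro x r hr
    have hball : {y : Yd d → ℝ | qdist x y < r} =
        {y : Yd d → ℝ | ∀ p, |Gmul x (Ginv y) p| < r ^ np p} := by
      ext y
      simp only [Set.mem_setOf_eq, qdist_eq_f]
      exact f_lt_iff _ hr
    rw [hball, volume_ball x r hr, hSsum]
    constructor
    · apply ENNReal.ofReal_le_ofReal
      have h1 : c⁻¹ ≤ 1 := by
        rw [inv_le_one_iff₀]; right; exact hc1
      have h2 : (1:ℝ) ≤ 2 ^ N := one_le_pow₀ one_le_two
      have h3 : (0:ℝ) ≤ r ^ S := by positivity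
      nlinarith [inv_nonneg.mpr hc0]
    · apply ENNReal.ofReal_le_ofReal
      have h3 : (0:ℝ) ≤ r ^ S := by positivity
      nlinarith
  · -- doubling
    intro x r hr
    have hball : ∀ s : ℝ, 0 < s → {y : Yd d → ℝ | qdist x y < s} =
        {y : Yd d → ℝ | ∀ p, |Gmul x (Ginv y) p| < s ^ np p} := by
      intro s hs
      ext y
      simp only [Set.mem_setOf_eq, qdist_eq_f]
      exact f_lt_iff _ hs
    rw [hball r hr, hball (2*r) (by linarith), volume_ball x r hr,
      volume_ball x (2*r) (by linarith)]
    rw [← ENNReal.ofReal_mul hc0]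
    apply ENNReal.ofReal_le_ofReal
    have h2 : (0:ℝ) ≤ r ^ S := by positivity
    have h3 : (0:ℝ) ≤ (2:ℝ) ^ N := by positivity
    calc (2:ℝ) ^ N * (2*r) ^ S = 2 ^ S * (2 ^ N * r ^ S) := by
          rw [mul_pow]; ring
      _ ≤ c * (2 ^ N * r ^ S) :=
          mul_le_mul_of_nonneg_right hc2S (mul_nonneg h3 h2)
end
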